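/- Let α₁, α₂ be holomorphic functions on a simply connected domain U with α₁ nonvanishing, and set a₃(t) = α₁(t)·(∫₀^t α₂(τ)/α₁(τ)² dτ + c₀), a₁ = a₃ + α₁, a₂ = λ α₁ with λ ≠ 0. Then W(a₂, a₁ − a₃) ≡ 0 and W(a₁, a₃) − λ₂(a₁ − a₃) = α₂ − λ₂ α₁; in particular W(a₁, a₃) = a₃' a₁ − a₁' a₃ = α₂. -/
import Mathlib


/-- The Wronskian `W(f,g) = f·g' − f'·g`. -/
noncomputable def Wr (f g : ℂ → ℂ) : ℂ → ℂ :=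
  fun t => f t * deriv g t - deriv f t * g t

/-- Let `α₁, α₂` be holomorphic on a simply connected domain `U ∋ 0` with `α₁` nonvanishing,
and set `a₃(t) = α₁(t)·(∫₀^t α₂/α₁² + c₀)` (the integral realized by a primitive `A` with
`A(0) = 0` and `A' = α₂/α₁²` on `U`), `a₁ = a₃ + α₁`, `a₂ = λα₁` with `λ ≠ 0`.
Then `W(a₂, a₁ − a₃) ≡ 0` on `U`, and `a₃' a₁ − a₁' a₃ = α₂` on `U` (in particular
`W(a₁, a₃) − λ₂(a₁ − a₃) = α₂ − λ₂ α₁` for any `λ₂`). -/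
theorem stmt14 (U : Set ℂ) (hU : IsOpen U) (hUconn : IsConnected U)
    (hsc : SimplyConnectedSpace U) (h0U : (0 : ℂ) ∈ U)
    (al1 al2 : ℂ → ℂ)
    (hal1 : ∀ t ∈ U, DifferentiableAt ℂ al1 t) (hal2 : ∀ t ∈ U, DifferentiableAt ℂ al2 t)
    (hal1ne : ∀ t ∈ U, al1 t ≠ 0)
    (A : ℂ → ℂ) (hA : ∀ t ∈ U, HasDerivAt A (al2 t / (al1 t) ^ 2) t) (hA0 : A 0 = 0)
    (c0 lam : ℂ) (hlam : lam ≠ 0)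
    (a1 a2 a3 : ℂ → ℂ)
    (ha3 : ∀ t, a3 t = al1 t * (A t + c0))
    (ha1 : ∀ t, a1 t = a3 t + al1 t)
    (ha2 : ∀ t, a2 t = lam * al1 t) :
    (∀ t ∈ U, Wr a2 (fun s => a1 s - a3 s) t = 0) ∧
    (∀ t ∈ U, deriv a3 t * a1 t - deriv a1 t * a3 t = al2 t) := by
  have hfa3 : a3 = fun t => al1 t * (A t + c0) := funext ha3
  have hfa1 : a1 = fun t => a3 t + al1 t := funext ha1
  have hfa2 : a2 = fun t => lam * al1 t := funext ha2
  constructor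
  · intro t ht
    have hal1' : HasDerivAt al1 (deriv al1 t) t := (hal1 t ht).hasDerivAt
    have hd2 : deriv a2 t = lam * deriv al1 t := by
      rw [hfa2]; exact (hal1'.const_mul lam).deriv
    have hdiff : (fun s => a1 s - a3 s) = al1 := by
      funext s; rw [ha1 s]; ring
    simp only [Wr, hdiff, hd2]
    rw [ha2 t, ha1 t]
    ring
  · intro t ht
    have hal1' : HasDerivAt al1 (deriv al1 t) t := (hal1 t ht).hasDerivAt
    have hA' := hA t ht
    have ha3d : HasDerivAt a3 (deriv al1 t * (A t + c0) + al1 t * (al2 t / al1 t ^ 2)) t := by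
      rw [hfa3]; exact hal1'.mul (hA'.add_const c0)
    have ha1d : HasDerivAt a1 ((deriv al1 t * (A t + c0) + al1 t * (al2 t / al1 t ^ 2)) + deriv al1 t) t := by
      rw [hfa1]; exact ha3d.add hal1'
    rw [ha3d.deriv, ha1d.deriv, ha1 t, ha3 t]
    have hne := hal1ne t ht
    field_simp
    ring
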